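/- Let V be a spherically complete subspace of a valued K-vector space W and let a ∈ W. Then the set {val(a + v) : v ∈ V} ⊆ Γ(W) ∪ {+∞} has a maximum; i.e., some element of the coset a + V is maximally close to 0. -/

import Mathlib

/-! The sets `{x ∈ V | val (a + v) ≤ val (a + x)}` are closed balls of `V` centred at `v`, by the
ultrametric inequality, and they are totally ordered by inclusion. A point in the intersection of
this chain, which exists by spherical completeness, is a best approximation of `-a` in `V`. -/

def IsValBall {A Γ : Type*} [AddCommGroup A] [AddCommGroup Γ] [LinearOrder Γ] [IsOrderedAddMonoid Γ]
    (val : A → WithTop Γ) (B : Set A) : Prop :=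
  ∃ (a : A) (γ : Γ), B = {x | (γ : WithTop Γ) ≤ val (x - a)} ∨
    B = {x | (γ : WithTop Γ) < val (x - a)}

def SphericallyComplete {A Γ : Type*} [AddCommGroup A] [AddCommGroup Γ] [LinearOrder Γ] [IsOrderedAddMonoid Γ]
    (val : A → WithTop Γ) : Prop :=
  ∀ 𝒞 : Set (Set A), (∀ B ∈ 𝒞, IsValBall val B) → IsChain (· ⊆ ·) 𝒞 →
    𝒞.Nonempty → (∀ B ∈ 𝒞, B.Nonempty) → (⋂₀ 𝒞).Nonempty

theorem eq_of_eq_add_of_eq_add {M : Type*} [AddCommMonoid M] [LinearOrder M]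
    [IsOrderedAddMonoid M] {c x y : M} (hy : y = c + x) (hx : x = c + y) : x = y := by
  rcases le_total 0 c with hc | hc
  · exact le_antisymm (hy ▸ le_add_of_nonneg_left hc) (hx ▸ le_add_of_nonneg_left hc)
  · exact le_antisymm (hx ▸ add_le_of_nonpos_left hc) (hy ▸ add_le_of_nonpos_left hc)

-- Applying `-1` twice is the identity, which forces `valK (-1)` to act trivially.
theorem val_neg_of_val_smul {K W Γ : Type*} [Ring K] [AddCommGroup W] [Module K W]
    [AddCommMonoid Γ] [LinearOrder Γ] [IsOrderedAddMonoid Γ]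
    {valK : K → Γ} {valW : W → Γ} (hsmul : ∀ (α : K) (w : W), valW (α • w) = valK α + valW w)
    (w : W) : valW (-w) = valW w :=
  (eq_of_eq_add_of_eq_add (by rw [← hsmul, neg_one_smul])
    (by rw [← hsmul, neg_one_smul, neg_neg])).symm

theorem le_val_add_iff {A Γ : Type*} [AddCommGroup A] [LinearOrder Γ] {val : A → Γ}
    (hultra : ∀ v w : A, min (val v) (val w) ≤ val (v + w))
    (hneg : ∀ w : A, val (-w) = val w) (u d : A) :
    val u ≤ val (u + d) ↔ val u ≤ val d := by
  constructor
  · intro h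
    have hd := hultra (u + d) (-u)
    rw [hneg, add_neg_cancel_comm] at hd
    exact (le_min h le_rfl).trans hd
  · exact fun h => (le_min le_rfl h).trans (hultra u d)

theorem isChain_range_setOf_le {A M : Type*} [LinearOrder M] (f : A → M) :
    IsChain (· ⊆ ·) (Set.range fun v => {x | f v ≤ f x}) := by
  rintro _ ⟨v, rfl⟩ _ ⟨w, rfl⟩ -
  rcases le_total (f v) (f w) with h | h
  · exact Or.inr fun x hx => h.trans hx
  · exact Or.inl fun x hx => h.trans hx

theorem SphericallyComplete.exists_forall_le {A Γ : Type*} [AddCommGroup A] [AddCommGroup Γ]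
    [LinearOrder Γ] [IsOrderedAddMonoid Γ] {val : A → WithTop Γ} (hsc : SphericallyComplete val)
    (f : A → WithTop Γ) (hf : ∀ v x, f v ≤ f x ↔ f v ≤ val (x - v)) : ∃ v₀, ∀ v, f v ≤ f v₀ := by
  by_cases htop : ∃ v, f v = ⊤
  · obtain ⟨v, hv⟩ := htop
    exact ⟨v, fun _ => hv ▸ le_top⟩
  push Not at htop
  have hball : ∀ v, IsValBall val {x | f v ≤ f x} := fun v => by
    obtain ⟨γ, hγ⟩ := WithTop.ne_top_iff_exists.mp (htop v)
    exact ⟨v, γ, Or.inl (Set.ext fun x => by simp only [Set.mem_ofPred_eq, hγ, hf])⟩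
  obtain ⟨v₀, hv₀⟩ := hsc _ (by rintro _ ⟨v, rfl⟩; exact hball v) (isChain_range_setOf_le f)
    (Set.range_nonempty _) (by rintro _ ⟨v, rfl⟩; exact ⟨v, show f v ≤ f v from le_rfl⟩)
  exact ⟨v₀, fun v => hv₀ _ ⟨v, rfl⟩⟩

theorem stmt4_general {K W Γ : Type*} [Field K] [AddCommGroup W] [Module K W]
    [AddCommGroup Γ] [LinearOrder Γ] [IsOrderedAddMonoid Γ]
    (valK : K → WithTop Γ)
    (valW : W → WithTop Γ)
    (hultra : ∀ v w : W, min (valW v) (valW w) ≤ valW (v + w))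
    (hsmul : ∀ (α : K) (w : W), valW (α • w) = valK α + valW w)
    (V : Submodule K W)
    (hVsc : SphericallyComplete (fun v : V => valW (v : W)))
    (a : W) :
    ∃ v₀ ∈ V, ∀ v ∈ V, valW (a + v) ≤ valW (a + v₀) := by
  have hneg := val_neg_of_val_smul hsmul
  obtain ⟨v₀, hv₀⟩ := hVsc.exists_forall_le (fun v => valW (a + v)) fun v x => by
    simpa only [Submodule.coe_sub, add_add_sub_cancel] using
      le_val_add_iff hultra hneg (a + v) (x - v : W)
  exact ⟨v₀, v₀.2, fun v hv => hv₀ ⟨v, hv⟩⟩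

theorem stmt4 {K W Γ : Type*} [Field K] [AddCommGroup W] [Module K W]
    [AddCommGroup Γ] [LinearOrder Γ] [IsOrderedAddMonoid Γ]
    (valK : K → WithTop Γ)
    (hvalK0 : ∀ x : K, valK x = ⊤ ↔ x = 0)
    (hvalKmul : ∀ x y : K, valK (x * y) = valK x + valK y)
    (hvalKultra : ∀ x y : K, min (valK x) (valK y) ≤ valK (x + y))
    (valW : W → WithTop Γ)
    (hvalW0 : ∀ w : W, valW w = ⊤ ↔ w = 0)
    (hultra : ∀ v w : W, min (valW v) (valW w) ≤ valW (v + w))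
    (hsmul : ∀ (α : K) (w : W), valW (α • w) = valK α + valW w)
    (V : Submodule K W)
    (hVsc : SphericallyComplete (fun v : V => valW (v : W)))
    (a : W) :
    ∃ v₀ ∈ V, ∀ v ∈ V, valW (a + v) ≤ valW (a + v₀) :=
  stmt4_general valK valW hultra hsmul V hVsc a
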